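/- arXiv:1001.2827 — 2 statements merged into one kernel-verified Lean document; each statement's English description precedes it below -/
import Mathlib

section
/- Let w be a word in the alphabet {a, b, b'} whose number of occurrences of a is even and whose total number of occurrences of b and b' is even. Then the image of w in G = ⟨a, b, b' | a² = b² = b'² = e, ab = b'a⟩ lies in the cyclic subgroup generated by bb'. -/
/-- The relators of the group `G = ⟨a, b, b' | a² = b² = b'² = e, ab = b'a⟩`,
with generator `0 ↦ a`, `1 ↦ b`, `2 ↦ b'`. -/
def rels : Set (FreeGroup (Fin 3)) :=
  {FreeGroup.of 0 * FreeGroup.of 0, FreeGroup.of 1 * FreeGroup.of 1,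
   FreeGroup.of 2 * FreeGroup.of 2,
   FreeGroup.of 0 * FreeGroup.of 1 * (FreeGroup.of 2 * FreeGroup.of 0)⁻¹}

/-- The group `G = ⟨a, b, b' | a² = b² = b'² = e, ab = b'a⟩`. -/
abbrev G : Type := PresentedGroup rels

def A : G := PresentedGroup.of 0
def B : G := PresentedGroup.of 1
def B' : G := PresentedGroup.of 2

/-- The element of `G` represented by a word in the alphabet `{a, b, b'}`. -/
def wordProd (w : List (Fin 3)) : G := (w.map (fun i => (PresentedGroup.of i : G))).prod

lemma rel_one {r : FreeGroup (Fin 3)} (hr : r ∈ rels) : PresentedGroup.mk rels r = 1 :=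
  (QuotientGroup.eq_one_iff _).mpr (Subgroup.subset_normalClosure hr)

lemma hA2 : A * A = 1 := rel_one (by unfold rels; left; rfl)

lemma hB2 : B * B = 1 := rel_one (by unfold rels; right; left; rfl)

lemma hB'2 : B' * B' = 1 := rel_one (by unfold rels; right; right; left; rfl)

lemma hrel : A * B = B' * A := by
  have h : (A * B) * (B' * A)⁻¹ = 1 :=
    rel_one (show _ ∈ rels by unfold rels; right; right; right; rfl)
  rw [mul_inv_eq_one] at h
  exact h

lemma hBinv : B⁻¹ = B := by rw [inv_eq_iff_mul_eq_one, hB2]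
lemma hB'inv : B'⁻¹ = B' := by rw [inv_eq_iff_mul_eq_one, hB'2]
lemma hAinv : A⁻¹ = A := by rw [inv_eq_iff_mul_eq_one, hA2]

lemma hPinv : (B * B')⁻¹ = B' * B := by rw [mul_inv_rev, hBinv, hB'inv]

lemma hBA : B * A = A * B' := by
  have : A * (A * B) = A * (B' * A) := by rw [hrel]
  rw [← mul_assoc, hA2, one_mul] at this
  rw [this, mul_assoc, mul_assoc, hA2, mul_one]

lemma semiA : A * (B * B') = (B * B')⁻¹ * A := by
  rw [hPinv, ← mul_assoc, hrel, mul_assoc, ← hBA, ← mul_assoc]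
lemma semiB : B * (B * B') = (B * B')⁻¹ * B := by
  rw [hPinv, ← mul_assoc, hB2, one_mul, mul_assoc, hB2, mul_one]
lemma semiB' : B' * (B * B') = (B * B')⁻¹ * B' := by
  rw [hPinv]; group

lemma move {g : G} (hg : g * (B * B') = (B * B')⁻¹ * g) (k : ℤ) :
    g * (B * B') ^ k = (B * B') ^ (-k) * g := by
  have h : SemiconjBy g (B * B') (B * B')⁻¹ := hg
  have := (h.zpow_right k).eq
  rwa [inv_zpow, ← zpow_neg] at this

lemma moveA (k : ℤ) : A * (B * B') ^ k = (B * B') ^ (-k) * A := move semiA k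
lemma moveB (k : ℤ) : B * (B * B') ^ k = (B * B') ^ (-k) * B := move semiB k
lemma moveB' (k : ℤ) : B' * (B * B') ^ k = (B * B') ^ (-k) * B' := move semiB' k

lemma hB'eq : B' = (B * B')⁻¹ * B := by rw [hPinv, mul_assoc, hB2, mul_one]
lemma hB'B : B' * B = (B * B')⁻¹ := hPinv.symm

lemma hAPinv : A * (B * B')⁻¹ = (B * B') * A := by simpa using moveA (-1)

lemma hAB'P : A * B' = (B * B') * (A * B) := by
  conv_lhs => rw [hB'eq]
  rw [← mul_assoc, hAPinv, mul_assoc]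

lemma q : B * (A * B) = (B * B') * A := by
  rw [← mul_assoc, hBA, mul_assoc, hB'B, hAPinv]

lemma c0b (k : ℤ) : A * ((B * B') ^ k * B) = (B * B') ^ (-k) * A * B := by
  rw [← mul_assoc, moveA]

lemma c0c (k : ℤ) : A * ((B * B') ^ k * A) = (B * B') ^ (-k) := by
  rw [← mul_assoc, moveA, mul_assoc, hA2, mul_one]

lemma c0d (k : ℤ) : A * ((B * B') ^ k * A * B) = (B * B') ^ (-k) * B :=
  calc A * ((B * B') ^ k * A * B) = A * ((B * B') ^ k * (A * B)) := by
        rw [mul_assoc ((B * B') ^ k) A B]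
  _ = (A * (B * B') ^ k) * (A * B) := (mul_assoc _ _ _).symm
  _ = ((B * B') ^ (-k) * A) * (A * B) := by rw [moveA]
  _ = (B * B') ^ (-k) * (A * (A * B)) := mul_assoc _ _ _
  _ = (B * B') ^ (-k) * ((A * A) * B) := congrArg _ (mul_assoc A A B).symm
  _ = (B * B') ^ (-k) * B := by rw [hA2, one_mul]

lemma c1b (k : ℤ) : B * ((B * B') ^ k * B) = (B * B') ^ (-k) := by
  rw [← mul_assoc, moveB, mul_assoc, hB2, mul_one]

lemma c1c (k : ℤ) : B * ((B * B') ^ k * A) = (B * B') ^ (-k + 1) * A * B :=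
  calc B * ((B * B') ^ k * A) = (B * (B * B') ^ k) * A := (mul_assoc _ _ _).symm
  _ = ((B * B') ^ (-k) * B) * A := by rw [moveB]
  _ = (B * B') ^ (-k) * (B * A) := mul_assoc _ _ _
  _ = (B * B') ^ (-k) * (A * B') := by rw [hBA]
  _ = (B * B') ^ (-k) * ((B * B') * (A * B)) := congrArg _ hAB'P
  _ = ((B * B') ^ (-k) * (B * B')) * (A * B) := (mul_assoc _ _ _).symm
  _ = (B * B') ^ (-k + 1) * (A * B) := by rw [← zpow_add_one]
  _ = (B * B') ^ (-k + 1) * A * B := (mul_assoc _ _ _).symm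

lemma c1d (k : ℤ) : B * ((B * B') ^ k * A * B) = (B * B') ^ (-k + 1) * A :=
  calc B * ((B * B') ^ k * A * B) = B * ((B * B') ^ k * (A * B)) := by
        rw [mul_assoc ((B * B') ^ k) A B]
  _ = (B * (B * B') ^ k) * (A * B) := (mul_assoc _ _ _).symm
  _ = ((B * B') ^ (-k) * B) * (A * B) := by rw [moveB]
  _ = (B * B') ^ (-k) * (B * (A * B)) := mul_assoc _ _ _
  _ = (B * B') ^ (-k) * ((B * B') * A) := by rw [q]
  _ = ((B * B') ^ (-k) * (B * B')) * A := (mul_assoc _ _ _).symm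
  _ = (B * B') ^ (-k + 1) * A := by rw [← zpow_add_one]

lemma c2a (k : ℤ) : B' * (B * B') ^ k = (B * B') ^ (-k - 1) * B :=
  calc B' * (B * B') ^ k = (B * B') ^ (-k) * B' := moveB' k
  _ = (B * B') ^ (-k) * ((B * B')⁻¹ * B) := congrArg _ hB'eq
  _ = ((B * B') ^ (-k) * (B * B')⁻¹) * B := (mul_assoc _ _ _).symm
  _ = (B * B') ^ (-k - 1) * B := by rw [← zpow_sub_one]

lemma c2b (k : ℤ) : B' * ((B * B') ^ k * B) = (B * B') ^ (-k - 1) := by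
  rw [← mul_assoc, moveB', mul_assoc, hB'B, ← zpow_sub_one]

lemma c2c (k : ℤ) : B' * ((B * B') ^ k * A) = (B * B') ^ (-k) * A * B := by
  rw [← mul_assoc, moveB', mul_assoc, ← hrel, ← mul_assoc]

lemma c2d (k : ℤ) : B' * ((B * B') ^ k * A * B) = (B * B') ^ (-k) * A :=
  calc B' * ((B * B') ^ k * A * B) = B' * ((B * B') ^ k * (A * B)) := by
        rw [mul_assoc ((B * B') ^ k) A B]
  _ = (B' * (B * B') ^ k) * (A * B) := (mul_assoc _ _ _).symm
  _ = ((B * B') ^ (-k) * B') * (A * B) := by rw [moveB']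
  _ = (B * B') ^ (-k) * (B' * (A * B)) := mul_assoc _ _ _
  _ = (B * B') ^ (-k) * ((B' * A) * B) := congrArg _ (mul_assoc B' A B).symm
  _ = (B * B') ^ (-k) * ((A * B) * B) := by rw [← hrel]
  _ = (B * B') ^ (-k) * (A * (B * B)) := congrArg _ (mul_assoc A B B)
  _ = (B * B') ^ (-k) * A := by rw [hB2, mul_one]

lemma even_mid (a b : ℕ) : Even (a + 1 + b) ↔ ¬ Even (a + b) := by rw [Nat.add_right_comm, Nat.even_add_one]

lemma key (w : List (Fin 3)) : ∃ k : ℤ, wordProd w =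
    (B * B') ^ k * (if Even (w.count 0) then 1 else A) *
      (if Even (w.count 1 + w.count 2) then 1 else B) := by
  induction w with
  | nil => exact ⟨0, by simp [wordProd]⟩
  | cons x w ih =>
    obtain ⟨k, hk⟩ := ih
    have hw : wordProd (x :: w) = PresentedGroup.of x * wordProd w := by
      simp [wordProd]
    rw [hw, hk]
    fin_cases x <;>
      [skip; skip; skip] <;>
      (by_cases he : Even (w.count 0) <;> by_cases hd : Even (w.count 1 + w.count 2) <;>
        simp only [List.count_cons, Fin.isValue] <;>
        simp [Nat.even_add_one, even_mid, he, hd, Nat.add_right_comm, ← Nat.add_assoc] <;>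
        (first
          | exact ⟨-k, moveA k⟩
          | exact ⟨-k, c0b k⟩
          | exact ⟨-k, c0c k⟩
          | exact ⟨-k, c0d k⟩
          | exact ⟨-k, moveB k⟩
          | exact ⟨-k, c1b k⟩
          | exact ⟨-k + 1, c1c k⟩
          | exact ⟨-k + 1, c1d k⟩
          | exact ⟨-k - 1, c2a k⟩
          | exact ⟨-k - 1, c2b k⟩
          | exact ⟨-k, c2c k⟩
          | exact ⟨-k, c2d k⟩))

/-- If a word `w` over `{a, b, b'}` has an even number of occurrences of `a` and an even
total number of occurrences of `b` and `b'`, then the element of `G` it represents lies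
in the cyclic subgroup generated by `bb'`. -/
theorem stmt6 (w : List (Fin 3)) (ha : Even (w.count 0))
    (hbb' : Even (w.count 1 + w.count 2)) :
    wordProd w ∈ Subgroup.zpowers (B * B') := by
  obtain ⟨k, hk⟩ := key w
  rw [if_pos ha, if_pos hbb', mul_one, mul_one] at hk
  rw [hk]
  exact Subgroup.zpow_mem _ (Subgroup.mem_zpowers _) k
end

section
/- If D' is obtained from a chord diagram D by a second Reidemeister move adding two parallel chords, then both new chords have equal Gaussian parity and, if odd, equal type; consequently the word w(D') is obtained from w(D) by inserting u·u at two places for a single letter u ∈ {a, b, b'}, and represents the same element of G. -/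
open scoped Classical

/-- The number of *even* chords linked with a given chord `c` (in the interlacement
graph `Γ` of a chord diagram, where a chord is even iff its degree is even). -/
noncomputable def evenLinkCount {V : Type} [Fintype V] (Γ : SimpleGraph V)
    [DecidableRel Γ.Adj] (c : V) : ℕ :=
  (Finset.univ.filter fun d => Γ.Adj c d ∧ Even (Γ.degree d)).card

lemma sq_one (i : Fin 3) : (PresentedGroup.of i : G) * PresentedGroup.of i = 1 := by
  have h : (FreeGroup.of i * FreeGroup.of i) ∈ Subgroup.normalClosure rels :=
    Subgroup.subset_normalClosure (by fin_cases i <;> simp [rels])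
  exact (QuotientGroup.eq_one_iff _).mpr h

lemma wordProd_append (p q : List (Fin 3)) :
    wordProd (p ++ q) = wordProd p * wordProd q := by
  simp [wordProd]

theorem stmt16' {V : Type} [Fintype V] (Γ : SimpleGraph V) [DecidableRel Γ.Adj]
    (c₁ c₂ : V) (hne : c₁ ≠ c₂) (hnadj : ¬ Γ.Adj c₁ c₂)
    (hsame : ∀ c : V, c ≠ c₁ → c ≠ c₂ → (Γ.Adj c c₁ ↔ Γ.Adj c c₂)) :
    (Even (Γ.degree c₁) ↔ Even (Γ.degree c₂)) ∧
    (Even (evenLinkCount Γ c₁) ↔ Even (evenLinkCount Γ c₂)) ∧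
    ∀ (p q r : List (Fin 3)) (x : Fin 3),
      wordProd (p ++ [x, x] ++ q ++ [x, x] ++ r) = wordProd (p ++ q ++ r) := by
  have hadj : ∀ d : V, Γ.Adj c₁ d ↔ Γ.Adj c₂ d := by
    intro d
    by_cases h1 : d = c₁
    · subst h1
      simp only [Γ.irrefl, false_iff]
      exact fun h => hnadj h.symm
    · by_cases h2 : d = c₂
      · subst h2
        simp only [Γ.irrefl, iff_false]
        exact hnadj
      · constructor
        · intro h; exact ((hsame d h1 h2).mp h.symm).symm
        · intro h; exact ((hsame d h1 h2).mpr h.symm).symm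
  refine ⟨?_, ?_, ?_⟩
  · have : Γ.degree c₁ = Γ.degree c₂ := by
      unfold SimpleGraph.degree
      congr 1
      ext d
      simp [SimpleGraph.mem_neighborFinset, hadj d]
    rw [this]
  · have : evenLinkCount Γ c₁ = evenLinkCount Γ c₂ := by
      unfold evenLinkCount
      congr 1
      ext d
      simp [hadj d]
    rw [this]
  · intro p q r x
    have h2 : wordProd [x, x] = 1 := by
      simp [wordProd, sq_one x]
    simp only [wordProd_append]
    simp [wordProd, sq_one x, mul_assoc]

/-- Two parallel chords `c₁, c₂` added by a second Reidemeister move (unlinked with each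
other, and linked with exactly the same other chords) have equal Gaussian parity and,
if odd, equal type; and inserting the corresponding pair of equal letters `u·u` at two
places in a word does not change the represented element of `G`. -/
theorem stmt16 {V : Type} [Fintype V] (Γ : SimpleGraph V) [DecidableRel Γ.Adj]
    (c₁ c₂ : V) (hne : c₁ ≠ c₂) (hnadj : ¬ Γ.Adj c₁ c₂)
    (hsame : ∀ c : V, c ≠ c₁ → c ≠ c₂ → (Γ.Adj c c₁ ↔ Γ.Adj c c₂)) :
    (Even (Γ.degree c₁) ↔ Even (Γ.degree c₂)) ∧
    (Even (evenLinkCount Γ c₁) ↔ Even (evenLinkCount Γ c₂)) ∧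
    ∀ (p q r : List (Fin 3)) (x : Fin 3),
      wordProd (p ++ [x, x] ++ q ++ [x, x] ++ r) = wordProd (p ++ q ++ r) :=
  stmt16' Γ c₁ c₂ hne hnadj hsame
end
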